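/- arXiv:1801.05189 — 11 statements merged into one kernel-verified Lean document; each statement's English description precedes it below -/
import Mathlib

section
/- For every integer s ≥ 2 and all u, v ∈ Z_{2^s}, the Gray map satisfies φ(u) + φ(v) = φ(u + v − 2(u ⊙ v)) (sum of binary vectors on the left, arithmetic in Z_{2^s} inside φ on the right). -/
/-! The correction `2 (u ⊙ v)` is exactly the carry of the binary addition `u + v`, so
`u + v - 2 (u ⊙ v)` is the digitwise XOR of `u` and `v`. Every coordinate of the Gray map is
`ZMod 2`-linear in the binary digits, hence additive under XOR. -/

/-- The `i`-th digit of the binary expansion of `u : ZMod (2^s)`. -/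
def gdigit (s : ℕ) (u : ZMod (2^s)) (i : ℕ) : ZMod 2 :=
  if (ZMod.val u).testBit i then 1 else 0

/-- Carlet's generalized Gray map `φ : ZMod (2^s) → (Z_2^{s-1} → Z_2)`:
the coordinate indexed by `y ∈ Z_2^{s-1}` is `u_{s-1} + ∑ u_i y_i`. -/
def gray (s : ℕ) (u : ZMod (2^s)) : (Fin (s - 1) → ZMod 2) → ZMod 2 :=
  fun y => gdigit s u (s - 1) + ∑ i : Fin (s - 1), gdigit s u (i : ℕ) * y i

/-- `u ⊙ v = ∑ 2^i u_i v_i`, the digitwise product. -/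
def odot (s : ℕ) (u v : ZMod (2^s)) : ZMod (2^s) :=
  ∑ i ∈ Finset.range s,
    (2 ^ i : ZMod (2^s)) * (if (ZMod.val u).testBit i ∧ (ZMod.val v).testBit i then 1 else 0)

theorem Nat.add_eq_xor_add_two_mul_and (a b : ℕ) : a + b = (a ^^^ b) + 2 * (a &&& b) := by
  induction a using Nat.strong_induction_on generalizing b with
  | _ a ih =>
    rcases Nat.eq_zero_or_pos a with rfl | ha
    · simp
    have ih := ih (a / 2) (Nat.div_lt_self ha one_lt_two) (b / 2)
    have hxor : (a ^^^ b) / 2 = a / 2 ^^^ b / 2 := Nat.xor_div_two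
    have hand : (a &&& b) / 2 = a / 2 &&& b / 2 := Nat.and_div_two
    have hxor_mod : (a ^^^ b) % 2 = (a + b) % 2 := Nat.xor_mod_two_eq
    have hand_mod : (a &&& b) % 2 = 1 ↔ a % 2 = 1 ∧ b % 2 = 1 := by
      simp only [Nat.mod_two_eq_one_iff_testBit_zero, Nat.testBit_and, Bool.and_eq_true]
    -- the lowest bits give a full adder; the rest is the identity for `a / 2` and `b / 2`
    omega

theorem Nat.sum_range_two_pow_mul_testBit (n s : ℕ) :
    ∑ i ∈ Finset.range s, 2 ^ i * (n.testBit i).toNat = n % 2 ^ s := by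
  induction s with
  | zero => simp [Nat.mod_one]
  | succ s ih => rw [Finset.sum_range_succ, ih, Nat.mod_pow_succ, Nat.toNat_testBit]

section

variable {s : ℕ}

theorem odot_eq_natCast_and (u v : ZMod (2 ^ s)) :
    odot s u v = ((u.val &&& v.val : ℕ) : ZMod (2 ^ s)) := by
  rw [← Nat.mod_eq_of_lt (Nat.and_lt_two_pow u.val v.val_lt),
    ← Nat.sum_range_two_pow_mul_testBit, odot]
  push_cast
  refine Finset.sum_congr rfl fun i _ => ?_
  rw [Nat.testBit_and]
  cases u.val.testBit i <;> cases v.val.testBit i <;> simp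

theorem add_sub_two_mul_odot (u v : ZMod (2 ^ s)) :
    u + v - 2 * odot s u v = ((u.val ^^^ v.val : ℕ) : ZMod (2 ^ s)) := by
  have h := congrArg (Nat.cast : ℕ → ZMod (2 ^ s)) (Nat.add_eq_xor_add_two_mul_and u.val v.val)
  push_cast [ZMod.natCast_val, ZMod.cast_id] at h
  rw [odot_eq_natCast_and]
  linear_combination h

theorem gdigit_add_sub_two_mul_odot (u v : ZMod (2 ^ s)) (i : ℕ) :
    gdigit s (u + v - 2 * odot s u v) i = gdigit s u i + gdigit s v i := by
  rw [add_sub_two_mul_odot, gdigit, gdigit, gdigit,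
    ZMod.val_cast_of_lt (Nat.xor_lt_two_pow u.val_lt v.val_lt), Nat.testBit_xor]
  cases u.val.testBit i <;> cases v.val.testBit i <;> decide

end

theorem gray_add_general (s : ℕ) (u v : ZMod (2^s)) :
    gray s u + gray s v = gray s (u + v - 2 * odot s u v) := by
  funext y
  simp only [gray, Pi.add_apply, gdigit_add_sub_two_mul_odot, add_mul, Finset.sum_add_distrib]
  ring

theorem gray_add (s : ℕ) (hs : 2 ≤ s) (u v : ZMod (2^s)) :
    gray s u + gray s v = gray s (u + v - 2 * odot s u v) :=
  gray_add_general s u v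
end

section
/- For every integer s ≥ 2, every u ∈ Z_{2^s}, and every integer p with 0 ≤ p ≤ s−1, one has φ(u) + φ(2^p) = φ(u + 2^p − 2^{p+1} u_p), where [u_0,…,u_{s−1}]_2 is the binary expansion of u. -/
/-!
Adding `2^p - 2^(p+1) u_p` to `u` flips the `p`-th binary digit of `u` and nothing else (no
carry or borrow occurs), so the result has value `val u ^^^ 2^p`. The Gray map is linear in the
binary digits over `Z_2`, hence turns the digitwise sum `^^^` of two values into the sum of their
images.
-/

theorem Nat.xor_two_pow_of_testBit_eq_false {n p : ℕ} (h : n.testBit p = false) :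
    n ^^^ 2 ^ p = n + 2 ^ p := by
  obtain ⟨a, b, hb, rfl⟩ : ∃ a b, b < 2 ^ p ∧ n = 2 ^ p * a + b :=
    ⟨n / 2 ^ p, n % 2 ^ p, Nat.mod_lt _ (Nat.two_pow_pos p), (Nat.div_add_mod n _).symm⟩
  have ha : a % 2 = 0 := by
    simpa [Nat.testBit_two_pow_mul_add a hb, Nat.testBit_zero] using h
  have hsum : 2 ^ p * a + b + 2 ^ p = 2 ^ p * (a + 1) + b := by ring
  rw [hsum]
  apply Nat.eq_of_testBit_eq
  intro j
  simp only [Nat.testBit_xor, Nat.testBit_two_pow_mul_add _ hb, Nat.testBit_two_pow]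
  rw [← Nat.xor_one_of_even (Nat.even_iff.mpr ha)]
  split_ifs with hj
  · simp [(Nat.ne_of_lt hj).symm]
  · have h1 : (1 : ℕ).testBit (j - p) = decide (p = j) := by
      rw [← Nat.pow_zero 2, Nat.testBit_two_pow]
      simp only [decide_eq_decide]
      omega
    simp [h1]

theorem Nat.cast_xor_two_pow {R : Type*} [Ring R] (n p : ℕ) :
    ((n ^^^ 2 ^ p : ℕ) : R) = n + 2 ^ p - 2 ^ (p + 1) * (if n.testBit p then 1 else 0) := by
  cases h : n.testBit p
  · simp [Nat.xor_two_pow_of_testBit_eq_false h]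
  · set m := n ^^^ 2 ^ p
    have hm : m.testBit p = false := by simp [m, h]
    have hn : n = m + 2 ^ p := by
      rw [← Nat.xor_two_pow_of_testBit_eq_false hm, Nat.xor_xor_cancel_right]
    rw [hn, if_pos rfl, mul_one, pow_succ, mul_two]
    push_cast
    abel

theorem ZMod.val_two_pow_of_lt {s p : ℕ} (h : p < s) : ((2 : ZMod (2 ^ s)) ^ p).val = 2 ^ p := by
  simpa using ZMod.val_natCast_of_lt (n := 2 ^ s) (Nat.pow_lt_pow_right one_lt_two h)

theorem gdigit_natCast_of_lt {s n : ℕ} (h : n < 2 ^ s) (i : ℕ) :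
    gdigit s n i = if n.testBit i then 1 else 0 := by
  rw [gdigit, ZMod.val_natCast_of_lt h]

theorem gdigit_natCast_xor_val {s : ℕ} (u v : ZMod (2 ^ s)) (i : ℕ) :
    gdigit s (u.val ^^^ v.val : ℕ) i = gdigit s u i + gdigit s v i := by
  rw [gdigit_natCast_of_lt (Nat.xor_lt_two_pow (ZMod.val_lt u) (ZMod.val_lt v)), gdigit, gdigit,
    Nat.testBit_xor]
  cases u.val.testBit i <;> cases v.val.testBit i <;> decide

theorem gray_natCast_xor_val {s : ℕ} (u v : ZMod (2 ^ s)) :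
    gray s (u.val ^^^ v.val : ℕ) = gray s u + gray s v := by
  funext y
  simp only [gray, Pi.add_apply, gdigit_natCast_xor_val, add_mul, Finset.sum_add_distrib]
  ring

theorem gray_add_two_pow (s : ℕ) (hs : 2 ≤ s) (u : ZMod (2^s)) (p : ℕ) (hp : p ≤ s - 1) :
    gray s u + gray s (2 ^ p) =
      gray s (u + 2 ^ p - 2 ^ (p + 1) * (if (ZMod.val u).testBit p then 1 else 0)) := by
  have hps : p < s := by omega
  rw [← gray_natCast_xor_val, ZMod.val_two_pow_of_lt hps, Nat.cast_xor_two_pow,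
    ZMod.natCast_zmod_val]
end

section
/- Let s ≥ 2 and let u ∈ Z_{2^s} be such that the digit u_{s−2} of its binary expansion equals 1, i.e. u ∈ {2^{s−2},…,2^{s−1}−1} ∪ {3·2^{s−2},…,2^s−1}. Then φ(u) + φ(2^{s−2}) = φ(u + 2^{s−2} + 2^{s−1}). -/
theorem gray_add_two_pow_sub_two (s : ℕ) (hs : 2 ≤ s) (u : ZMod (2^s))
    (hu : (ZMod.val u).testBit (s - 2) = true) :
    gray s u + gray s (2 ^ (s - 2)) = gray s (u + 2 ^ (s - 2) + 2 ^ (s - 1)) := by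
  obtain ⟨t, rfl⟩ : ∃ t, s = t + 2 := ⟨s - 2, by omega⟩
  simp only [Nat.add_sub_cancel] at hu
  show gray (t + 2) u + gray (t + 2) (2 ^ t) =
    gray (t + 2) (u + 2 ^ t + 2 ^ (t + 1))
  haveI : NeZero (2 ^ (t + 2)) := ⟨by positivity⟩
  have hp1 : (2 : ℕ) ^ (t + 2) = 2 ^ (t + 1) * 2 := by ring
  have hp2 : (2 : ℕ) ^ (t + 1) = 2 ^ t * 2 := by ring
  have hv : ZMod.val u = ZMod.val u := rfl
  set v := ZMod.val u with hv
  have hvlt : v < 2 ^ (t + 2) := ZMod.val_lt u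
  set L := v % 2 ^ t with hL
  set b := v / 2 ^ (t + 1) with hb
  clear_value v L b
  have hLlt : L < 2 ^ t := by rw [hL]; exact Nat.mod_lt _ (by positivity)
  have hblt : b < 2 := by
    rw [hb, Nat.div_lt_iff_lt_mul (by positivity)]
    omega
  have hmod : v % 2 ^ (t + 1) = 2 ^ t + L := by
    have e2 := Nat.div_add_mod (v % 2 ^ (t + 1)) (2 ^ t)
    have e3 : (v % 2 ^ (t + 1)) % 2 ^ t = L := by
      rw [hL]; exact Nat.mod_mod_of_dvd v (pow_dvd_pow 2 (by omega))
    have e4 : (v % 2 ^ (t + 1)) / 2 ^ t = 1 := by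
      have hlt : (v % 2 ^ (t + 1)) / 2 ^ t < 2 := by
        rw [Nat.div_lt_iff_lt_mul (by positivity)]
        have := Nat.mod_lt v (show 0 < 2 ^ (t + 1) by positivity)
        omega
      have hbit : (v % 2 ^ (t + 1)).testBit t = true := by
        rw [Nat.testBit_mod_two_pow]
        simp [hu]
      rw [Nat.testBit_eq_decide_div_mod_eq, decide_eq_true_eq] at hbit
      generalize hq : (v % 2 ^ (t + 1)) / 2 ^ t = q at hbit hlt ⊢
      omega
    rw [e4, e3] at e2
    omega
  have hdecomp : v = 2 ^ (t + 1) * b + 2 ^ t + L := by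
    have e1 := Nat.div_add_mod v (2 ^ (t + 1))
    rw [hmod, ← hb] at e1
    rw [← e1]
    ring
  -- value of the sum
  have hc1 : (2 ^ t : ZMod (2 ^ (t + 2))) = ((2 ^ t : ℕ) : ZMod (2 ^ (t + 2))) := by
    push_cast; ring
  have hc2 : (2 ^ (t + 1) : ZMod (2 ^ (t + 2))) = ((2 ^ (t + 1) : ℕ) : ZMod (2 ^ (t + 2))) := by
    push_cast; ring
  have hucast : u = ((v : ℕ) : ZMod (2 ^ (t + 2))) := by
    rw [hv]
    exact ((ZMod.natCast_val u).trans (ZMod.cast_id _ _)).symm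
  set w : ZMod (2 ^ (t + 2)) := u + 2 ^ t + 2 ^ (t + 1) with hw
  have hwval : w.val = 2 ^ (t + 1) * b + L := by
    have hsum : w = ((2 ^ (t + 1) * b + L : ℕ) : ZMod (2 ^ (t + 2))) := by
      rw [hw, hc1, hc2, hucast, hdecomp]
      have hz : ((2 ^ (t + 2) : ℕ) : ZMod (2 ^ (t + 2))) = 0 := ZMod.natCast_self _
      push_cast at hz ⊢
      linear_combination hz
    rw [hsum, ZMod.val_natCast, Nat.mod_eq_of_lt]
    rcases (show b = 0 ∨ b = 1 by omega) with hb' | hb' <;> rw [hb'] <;> omega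
  -- digits of w
  have hwbit : ∀ j, w.val.testBit j =
      if j < t + 1 then L.testBit j else b.testBit (j - (t + 1)) := by
    intro j
    rw [hwval]
    exact Nat.testBit_two_pow_mul_add b
      (lt_trans hLlt (Nat.pow_lt_pow_right (by norm_num) (by omega))) j
  have hdw_top : gdigit (t + 2) w (t + 1) = gdigit (t + 2) u (t + 1) := by
    unfold gdigit
    rw [hwbit (t + 1)]
    simp only [lt_irrefl, if_false, Nat.sub_self]
    rw [Nat.testBit_eq_decide_div_mod_eq, Nat.testBit_eq_decide_div_mod_eq]
    norm_num [← hb, ← hv]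
  have hdw_t : gdigit (t + 2) w t = 0 := by
    unfold gdigit
    rw [hwbit t]
    simp [Nat.testBit_lt_two_pow hLlt]
  have hdw_lo : ∀ j, j < t → gdigit (t + 2) w j = gdigit (t + 2) u j := by
    intro j hj
    unfold gdigit
    rw [hwbit j, if_pos (Nat.lt_succ_of_lt hj), hL, Nat.testBit_mod_two_pow,
      decide_eq_true hj, Bool.true_and, hv]
  -- digits of 2^t
  have hcval : (2 ^ t : ZMod (2 ^ (t + 2))).val = 2 ^ t := by
    rw [hc1, ZMod.val_natCast, Nat.mod_eq_of_lt]
    exact Nat.pow_lt_pow_right (by norm_num) (by omega)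
  have hdc : ∀ j, gdigit (t + 2) (2 ^ t : ZMod (2 ^ (t + 2))) j =
      if t = j then 1 else 0 := by
    intro j
    unfold gdigit
    rw [hcval, Nat.testBit_two_pow]
    by_cases h : t = j
    · rw [if_pos h, h]
      simp
    · rw [if_neg h]
      simp [h]
  have hdu_t : gdigit (t + 2) u t = 1 := by
    unfold gdigit
    rw [← hv, hu]
    rfl
  -- assemble
  funext y
  show gdigit (t + 2) u (t + 1) + ∑ i : Fin (t + 1), gdigit (t + 2) u (i : ℕ) * y i +
      (gdigit (t + 2) (2 ^ t) (t + 1) + ∑ i : Fin (t + 1), gdigit (t + 2) (2 ^ t) (i : ℕ) * y i) =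
      gdigit (t + 2) w (t + 1) + ∑ i : Fin (t + 1), gdigit (t + 2) w (i : ℕ) * y i
  rw [Fin.sum_univ_castSucc (fun i : Fin (t + 1) => gdigit (t + 2) u (i : ℕ) * y i),
    Fin.sum_univ_castSucc (fun i : Fin (t + 1) => gdigit (t + 2) (2 ^ t) (i : ℕ) * y i),
    Fin.sum_univ_castSucc (fun i : Fin (t + 1) => gdigit (t + 2) w (i : ℕ) * y i)]
  have hsum1 : ∑ i : Fin t, gdigit (t + 2) u (i.castSucc : ℕ) * y i.castSucc =
      ∑ i : Fin t, gdigit (t + 2) w (i.castSucc : ℕ) * y i.castSucc := by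
    refine Finset.sum_congr rfl fun i _ => ?_
    simp only [Fin.coe_castSucc]
    rw [hdw_lo i i.isLt]
  have hsum2 : ∑ i : Fin t, gdigit (t + 2) (2 ^ t : ZMod (2 ^ (t + 2))) (i.castSucc : ℕ) * y i.castSucc = 0 := by
    refine Finset.sum_eq_zero fun i _ => ?_
    rw [hdc, if_neg (show ¬ t = ((i.castSucc : Fin (t + 1)) : ℕ) by
      have := i.isLt
      simp only [Fin.coe_castSucc]
      omega)]
    ring
  have hlast : ((Fin.last t : Fin (t + 1)) : ℕ) = t := rfl
  rw [hsum1, hsum2, hlast, hdw_top, hdw_t, hdu_t, hdc (t + 1), hdc t,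
    if_neg (by omega), if_pos rfl]
  have hyy : y (Fin.last t) + y (Fin.last t) = 0 := by
    have h2 : ∀ z : ZMod 2, z + z = 0 := by decide
    exact h2 _
  linear_combination hyy
end

section
/- Let s ≥ 2, let U = {2^{s−2},…,2^{s−1}−1} ∪ {3·2^{s−2},…,2^s−1} ⊆ Z_{2^s}, and let v ∈ {2^{s−2}, 3·2^{s−2}}. Then for every u ∈ Z_{2^s}: φ(u) + φ(v) = φ(u + v + 2^{s−1}) if u ∈ U, and φ(u) + φ(v) = φ(u + v) if u ∉ U. -/
/-!
Every coordinate of `φ u` is affine over `Z_2` in the binary digits of `u`, so `φ u + φ v = φ w`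
as soon as the digits of `w` are the XOR of those of `u` and `v`. Write `s = n + 2`, so that
`v = 2^n c` with `c ∈ {1, 3}`. Below bit `n` nothing happens; on the top two bits, adding `c`
agrees with XOR-ing it unless bit `n` of `u` is set, in which case a carry of `2^(n+1)` appears,
and adding a further `2^(n+1)` cancels it modulo `2^(n+2)`.
-/

namespace Nat

theorem two_pow_mul_add_xor_two_pow_mul {n x : ℕ} (hx : x < 2 ^ n) (k c : ℕ) :
    (2 ^ n * k + x) ^^^ 2 ^ n * c = 2 ^ n * (k ^^^ c) + x := by
  apply eq_of_testBit_eq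
  intro j
  simp only [testBit_xor, testBit_two_pow_mul_add _ hx, testBit_two_pow_mul]
  by_cases hj : j < n
  · simp [hj, not_le.mpr hj]
  · simp [hj, not_lt.mp hj]

theorem two_pow_mul_add_mod_two_pow_mul {n x : ℕ} (hx : x < 2 ^ n) (k m : ℕ) :
    (2 ^ n * k + x) % (2 ^ n * m) = 2 ^ n * (k % m) + x := by
  rw [mod_mul, mul_add_mod_self_left, mod_eq_of_lt hx,
    mul_add_div (Nat.two_pow_pos n), div_eq_of_lt hx, add_zero, add_comm]

theorem add_two_pow_mul_add_ite_mod_eq_xor {n a c : ℕ} (ha : a < 2 ^ (n + 2))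
    (hc : c = 1 ∨ c = 3) :
    (a + 2 ^ n * c + if a.testBit n then 2 ^ (n + 1) else 0) % 2 ^ (n + 2)
      = a ^^^ 2 ^ n * c := by
  obtain ⟨hx, hdecomp⟩ : a % 2 ^ n < 2 ^ n ∧ 2 ^ n * (a / 2 ^ n) + a % 2 ^ n = a :=
    ⟨mod_lt _ (Nat.two_pow_pos n), div_add_mod a _⟩
  set x := a % 2 ^ n
  set t := a / 2 ^ n
  have ht : t < 4 := by
    rw [div_lt_iff_lt_mul (Nat.two_pow_pos n)]; rw [pow_add] at ha; linarith
  have hbit : a.testBit n = t.testBit 0 := by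
    rw [← hdecomp, testBit_two_pow_mul_add _ hx]; simp
  have hsum : a + 2 ^ n * c + (if t.testBit 0 then 2 ^ (n + 1) else 0)
      = 2 ^ n * (t + c + if t.testBit 0 then 2 else 0) + x := by
    rw [← hdecomp]; split_ifs <;> ring
  have hcarry : (t + c + if t.testBit 0 then 2 else 0) % 4 = t ^^^ c := by
    interval_cases t <;> rcases hc with rfl | rfl <;> decide
  rw [hbit, hsum, pow_add, show (2 : ℕ) ^ 2 = 4 from rfl, two_pow_mul_add_mod_two_pow_mul hx,
    hcarry, ← hdecomp, two_pow_mul_add_xor_two_pow_mul hx]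

end Nat

theorem gdigit_eq_add_of_val_eq_xor {s : ℕ} {u v w : ZMod (2 ^ s)}
    (hw : w.val = u.val ^^^ v.val) (i : ℕ) :
    gdigit s w i = gdigit s u i + gdigit s v i := by
  unfold gdigit
  rw [hw, Nat.testBit_xor]
  cases u.val.testBit i <;> cases v.val.testBit i <;> decide

theorem gray_add_eq_of_val_eq_xor {s : ℕ} {u v w : ZMod (2 ^ s)}
    (hw : w.val = u.val ^^^ v.val) : gray s u + gray s v = gray s w := by
  funext y
  simp only [Pi.add_apply, gray, gdigit_eq_add_of_val_eq_xor hw, add_mul,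
    Finset.sum_add_distrib]
  ring

theorem ZMod.val_add_add_ite_eq_xor {n : ℕ} (u v : ZMod (2 ^ (n + 2)))
    (hv : v = 2 ^ n ∨ v = 3 * 2 ^ n) :
    (u + v + if u.val.testBit n then 2 ^ (n + 1) else 0).val = u.val ^^^ v.val := by
  obtain ⟨c, hc, rfl⟩ :
      ∃ c : ℕ, (c = 1 ∨ c = 3) ∧ v = ((2 ^ n * c : ℕ) : ZMod (2 ^ (n + 2))) := by
    rcases hv with rfl | rfl
    · exact ⟨1, Or.inl rfl, by push_cast; ring⟩
    · exact ⟨3, Or.inr rfl, by push_cast; ring⟩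
  have hv_lt : 2 ^ n * c < 2 ^ (n + 2) := by
    rw [pow_add]; apply Nat.mul_lt_mul_of_pos_left _ (Nat.two_pow_pos n); omega
  have hsum : u + ((2 ^ n * c : ℕ) : ZMod (2 ^ (n + 2)))
        + (if u.val.testBit n then 2 ^ (n + 1) else 0)
      = ((u.val + 2 ^ n * c + if u.val.testBit n then 2 ^ (n + 1) else 0 : ℕ) :
          ZMod (2 ^ (n + 2))) := by
    split_ifs <;> simp
  rw [hsum, ZMod.val_natCast, ZMod.val_natCast_of_lt hv_lt,
    Nat.add_two_pow_mul_add_ite_mod_eq_xor (ZMod.val_lt u) hc]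

theorem gray_add_cases (s : ℕ) (hs : 2 ≤ s) (v : ZMod (2^s))
    (hv : v = 2 ^ (s - 2) ∨ v = 3 * 2 ^ (s - 2)) (u : ZMod (2^s)) :
    ((ZMod.val u).testBit (s - 2) = true →
      gray s u + gray s v = gray s (u + v + 2 ^ (s - 1))) ∧
    ((ZMod.val u).testBit (s - 2) = false →
      gray s u + gray s v = gray s (u + v)) := by
  obtain ⟨n, rfl⟩ : ∃ n, s = n + 2 := ⟨s - 2, by omega⟩
  simp only [Nat.add_sub_cancel, show n + 2 - 1 = n + 1 from rfl] at hv ⊢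
  have hxor := ZMod.val_add_add_ite_eq_xor u v hv
  constructor <;> intro hbit
  · exact gray_add_eq_of_val_eq_xor (by simpa [hbit] using hxor)
  · exact gray_add_eq_of_val_eq_xor (by simpa [hbit] using hxor)
end

section
/- Let s ≥ 2 and let λ_0,…,λ_{s−2} ∈ {0,1}. Then Σ_{i=0}^{s−2} λ_i·φ(2^i) = φ(Σ_{i=0}^{s−2} λ_i·2^i), where the left-hand sum is taken in Z_2^{2^{s−1}} and the inner sum on the right is taken in Z_{2^s}. -/
/-! For `u = ∑_{i ∈ S} 2^i` with `S ⊆ {0, …, s-2}`, the binary digits of `u` are the indicator of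
`S` and the top digit `u_{s-1}` vanishes, so `φ(u)` is the linear form `y ↦ ∑_{i ∈ S} y_i`.
In particular `φ(2^i)` is the `i`-th coordinate form, and `φ` is additive on such sums. -/

theorem Nat.testBit_sum_two_pow (S : Finset ℕ) (j : ℕ) :
    (∑ i ∈ S, 2 ^ i).testBit j ↔ j ∈ S := by
  rw [← Nat.mem_bitIndices, ← List.mem_toFinset, Finset.toFinset_bitIndices_sum_two_pow]

lemma gdigit_natCast {s n : ℕ} (hn : n < 2 ^ s) (i : ℕ) :
    gdigit s n i = if n.testBit i then 1 else 0 := by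
  rw [gdigit, ZMod.val_natCast_of_lt hn]

lemma gray_natCast_sum_two_pow {s : ℕ} (S : Finset (Fin (s - 1))) (y : Fin (s - 1) → ZMod 2) :
    gray s (∑ i ∈ S, 2 ^ (i : ℕ) : ℕ) y = ∑ i ∈ S, y i := by
  have hsum : ∑ i ∈ S, 2 ^ (i : ℕ) = ∑ j ∈ S.map Fin.valEmbedding, 2 ^ j := by
    rw [Finset.sum_map]; rfl
  have hlt : ∑ i ∈ S, 2 ^ (i : ℕ) < 2 ^ s := by
    rw [hsum]
    exact Nat.geomSum_lt le_rfl fun k hk => by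
      obtain ⟨i, -, rfl⟩ := Finset.mem_map.1 hk
      simp only [Fin.valEmbedding_apply]; omega
  have htop : ¬ (∑ i ∈ S, 2 ^ (i : ℕ)).testBit (s - 1) := by
    rw [hsum, Nat.testBit_sum_two_pow]
    simp only [Finset.mem_map, Fin.valEmbedding_apply, not_exists, not_and]
    omega
  have hdigit (i : Fin (s - 1)) : (∑ i ∈ S, 2 ^ (i : ℕ)).testBit i ↔ i ∈ S := by
    rw [hsum, Nat.testBit_sum_two_pow]
    exact Finset.mem_map' Fin.valEmbedding
  simp only [gray, gdigit_natCast hlt, htop, hdigit, if_false, zero_add, ite_mul, one_mul,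
    zero_mul, Finset.sum_ite_mem, Finset.univ_inter]

lemma gray_two_pow {s : ℕ} (i : Fin (s - 1)) (y : Fin (s - 1) → ZMod 2) :
    gray s (2 ^ (i : ℕ)) y = y i := by
  simpa using gray_natCast_sum_two_pow {i} y

lemma gray_natCast_sum_two_pow_eq_sum {s : ℕ} (S : Finset (Fin (s - 1))) :
    gray s (∑ i ∈ S, 2 ^ (i : ℕ) : ℕ) = ∑ i ∈ S, gray s (2 ^ (i : ℕ)) := by
  funext y
  simp only [gray_natCast_sum_two_pow, Finset.sum_apply, gray_two_pow]

theorem gray_sum_two_pows_general (s : ℕ) (lam : ℕ → ℕ) (hlam : ∀ i, lam i ≤ 1) :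
    ∑ i ∈ Finset.range (s - 1), lam i • gray s (2 ^ i) =
      gray s (∑ i ∈ Finset.range (s - 1), (lam i : ZMod (2^s)) * 2 ^ i) := by
  set S := Finset.univ.filter fun i : Fin (s - 1) => lam i = 1
  have hlamS (i : Fin (s - 1)) : lam i = if i ∈ S then 1 else 0 := by
    rcases Nat.le_one_iff_eq_zero_or_eq_one.1 (hlam i) with h | h <;> simp [S, h]
  rw [← Fin.sum_univ_eq_sum_range (fun i => lam i • gray s (2 ^ i)),
    ← Fin.sum_univ_eq_sum_range (fun i => (lam i : ZMod (2 ^ s)) * 2 ^ i)]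
  simp only [hlamS, ite_smul, one_smul, zero_smul, Finset.sum_ite_mem, Finset.univ_inter]
  rw [← gray_natCast_sum_two_pow_eq_sum]
  push_cast
  simp only [ite_mul, one_mul, zero_mul, Finset.sum_ite_mem, Finset.univ_inter]

theorem gray_sum_two_pows (s : ℕ) (hs : 2 ≤ s) (lam : ℕ → ℕ) (hlam : ∀ i, lam i ≤ 1) :
    ∑ i ∈ Finset.range (s - 1), lam i • gray s (2 ^ i) =
      gray s (∑ i ∈ Finset.range (s - 1), (lam i : ZMod (2^s)) * 2 ^ i) :=
  gray_sum_two_pows_general s lam hlam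
end

section
/- For every integer s ≥ 2 and all u, v ∈ Z_{2^s}, the Hamming distance between the Gray images satisfies d_H(φ(u), φ(v)) = wt_H(φ(u − v)). -/
/-
The coordinate function of `gray s u` is the affine form `y ↦ u_{s-1} + ∑ u_i y_i`, and
`gray s u - gray s v` is the affine form with constant `u_{s-1} - v_{s-1}` and linear part
`(u_i - v_i)_{i < s-1}`. The weight of an affine form on `(ZMod 2)^n` is `0`, `2^n` or `2^(n-1)`
according to whether its linear part and its constant vanish. The linear part of
`gray s u - gray s v` vanishes iff `u ≡ v [mod 2^(s-1)]`, i.e. iff that of `gray s (u - v)` does,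
and in that case both constants vanish iff `u = v`.
-/

open Finset

section AffineForm

variable {n : ℕ}

def affineForm (c : ZMod 2) (a y : Fin n → ZMod 2) : ZMod 2 :=
  c + ∑ i, a i * y i

lemma affineForm_sub_affineForm (c c' : ZMod 2) (a a' : Fin n → ZMod 2) :
    affineForm c a - affineForm c' a' = affineForm (c - c') (a - a') := by
  funext y
  simp only [affineForm, Pi.sub_apply, sub_mul, sum_sub_distrib]
  ring

lemma affineForm_add_single (c : ZMod 2) (a y : Fin n → ZMod 2) (i : Fin n) :
    affineForm c a (y + Pi.single i 1) = affineForm c a y + a i := by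
  simp only [affineForm, Pi.add_apply, mul_add, sum_add_distrib, Pi.single_apply, mul_ite,
    mul_one, mul_zero, sum_ite_eq', mem_univ, if_true]
  ring

lemma hammingNorm_affineForm_zero (c : ZMod 2) :
    hammingNorm (affineForm c (0 : Fin n → ZMod 2)) = if c = 0 then 0 else 2 ^ n := by
  split_ifs with hc <;> simp [hammingNorm, affineForm, hc]

lemma hammingNorm_affineForm_of_ne_zero (c : ZMod 2) {a : Fin n → ZMod 2} (ha : a ≠ 0) :
    hammingNorm (affineForm c a) = 2 ^ (n - 1) := by
  obtain ⟨i, hi⟩ := Function.ne_iff.mp ha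
  have hai : a i = 1 := (by decide : ∀ x : ZMod 2, x ≠ 0 → x = 1) _ hi
  -- translating by the `i`-th unit vector adds `a i = 1`, swapping zeros and non-zeros
  have hswap : #{y | affineForm c a y ≠ 0} = #{y | affineForm c a y = 0} := by
    refine card_equiv (Equiv.addRight (Pi.single i 1)) fun y => ?_
    have hflip : ∀ x : ZMod 2, x ≠ 0 ↔ x + 1 = 0 := by decide
    simp [affineForm_add_single, hai, hflip]
  have htotal := card_filter_add_card_filter_not (s := univ) (fun y => affineForm c a y = 0)
  have hpow : 2 ^ n = 2 * 2 ^ (n - 1) := by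
    rw [← pow_succ', Nat.sub_add_cancel i.pos]
  rw [card_univ, Fintype.card_fun, ZMod.card, Fintype.card_fin] at htotal
  simp only [hammingNorm, ne_eq] at hswap ⊢
  omega

lemma hammingNorm_affineForm (c : ZMod 2) (a : Fin n → ZMod 2) :
    hammingNorm (affineForm c a) =
      if a = 0 then (if c = 0 then 0 else 2 ^ n) else 2 ^ (n - 1) := by
  by_cases ha : a = 0
  · rw [ha, hammingNorm_affineForm_zero, if_pos rfl]
  · rw [hammingNorm_affineForm_of_ne_zero c ha, if_neg ha]

end AffineForm

lemma Nat.mod_two_pow_eq_mod_two_pow_iff (x y k : ℕ) :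
    x % 2 ^ k = y % 2 ^ k ↔ ∀ i < k, x.testBit i = y.testBit i := by
  refine ⟨fun h i hi => ?_, fun h => Nat.eq_of_testBit_eq fun i => ?_⟩
  · simpa [Nat.testBit_mod_two_pow, hi] using congrArg (Nat.testBit · i) h
  · by_cases hi : i < k <;> simp [Nat.testBit_mod_two_pow, hi, h]

section Digits

variable {s : ℕ}

lemma gray_eq_affineForm (u : ZMod (2 ^ s)) :
    gray s u = affineForm (gdigit s u (s - 1)) (fun i => gdigit s u i) := rfl

lemma gdigit_zero (i : ℕ) : gdigit s 0 i = 0 := by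
  simp [gdigit]

lemma gdigit_eq_gdigit_iff (u v : ZMod (2 ^ s)) (i : ℕ) :
    gdigit s u i = gdigit s v i ↔ u.val.testBit i = v.val.testBit i := by
  unfold gdigit
  split_ifs <;> simp_all

lemma forall_lt_gdigit_eq_iff_cast_eq (k : ℕ) (u v : ZMod (2 ^ s)) :
    (∀ i < k, gdigit s u i = gdigit s v i) ↔ (u.cast : ZMod (2 ^ k)) = v.cast := by
  simp only [gdigit_eq_gdigit_iff, ← Nat.mod_two_pow_eq_mod_two_pow_iff, ← ZMod.natCast_val,
    ZMod.natCast_eq_natCast_iff']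

lemma eq_iff_forall_lt_gdigit_eq (u v : ZMod (2 ^ s)) :
    u = v ↔ ∀ i < s, gdigit s u i = gdigit s v i := by
  rw [forall_lt_gdigit_eq_iff_cast_eq, ZMod.cast_id, ZMod.cast_id]

lemma eq_iff_gdigit_eq_of_forall_lt {u v : ZMod (2 ^ s)}
    (hlow : ∀ i < s - 1, gdigit s u i = gdigit s v i) :
    u = v ↔ gdigit s u (s - 1) = gdigit s v (s - 1) := by
  refine ⟨by rintro rfl; rfl, fun htop => (eq_iff_forall_lt_gdigit_eq u v).mpr fun i hi => ?_⟩
  obtain hi | rfl : i < s - 1 ∨ i = s - 1 := by omega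
  exacts [hlow i hi, htop]

end Digits

theorem hammingDist_gray_general (s : ℕ) (u v : ZMod (2^s)) :
    hammingDist (gray s u) (gray s v) = hammingNorm (gray s (u - v)) := by
  have hlow : (∀ i < s - 1, gdigit s u i = gdigit s v i) ↔
      ∀ i < s - 1, gdigit s (u - v) i = gdigit s 0 i := by
    simp only [forall_lt_gdigit_eq_iff_cast_eq, ZMod.cast_sub (pow_dvd_pow 2 (Nat.sub_le s 1)),
      ZMod.cast_zero, sub_eq_zero]
  have htop (h : ∀ i < s - 1, gdigit s u i = gdigit s v i) :
      gdigit s u (s - 1) = gdigit s v (s - 1) ↔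
        gdigit s (u - v) (s - 1) = gdigit s 0 (s - 1) := by
    rw [← eq_iff_gdigit_eq_of_forall_lt h, ← eq_iff_gdigit_eq_of_forall_lt (hlow.mp h),
      sub_eq_zero]
  rw [hammingDist_comm, hammingDist_eq_hammingNorm, neg_add_eq_sub, gray_eq_affineForm,
    gray_eq_affineForm, gray_eq_affineForm, affineForm_sub_affineForm, hammingNorm_affineForm,
    hammingNorm_affineForm]
  simp only [gdigit_zero, sub_eq_zero, funext_iff, Pi.zero_apply, Fin.forall_iff] at hlow htop ⊢
  split_ifs <;> tauto

theorem hammingDist_gray (s : ℕ) (hs : 2 ≤ s) (u v : ZMod (2^s)) :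
    hammingDist (gray s u) (gray s v) = hammingNorm (gray s (u - v)) :=
  hammingDist_gray_general s u v
end

section
/- For every integer s ≥ 2 and all u, v ∈ Z_{2^s}, one has d_H(φ(u), φ(v + 2^{s−1})) + d_H(φ(u), φ(v)) = 2^{s−1}. -/
lemma val_add_pow (s : ℕ) (hs : 2 ≤ s) (v : ZMod (2^s)) :
    (v + 2 ^ (s - 1)).val = (v.val + 2 ^ (s - 1)) % 2 ^ s := by
  haveI : NeZero (2^s) := ⟨by positivity⟩
  have h1 : ((2 : ZMod (2^s)) ^ (s - 1)) = ((2 ^ (s - 1) : ℕ) : ZMod (2^s)) := by push_cast; ring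
  rw [ZMod.val_add, h1, ZMod.val_natCast_of_lt (by
    exact Nat.pow_lt_pow_right one_lt_two (by omega))]

lemma gray_add_pow (s : ℕ) (hs : 2 ≤ s) (v : ZMod (2^s)) (y : Fin (s - 1) → ZMod 2) :
    gray s (v + 2 ^ (s - 1)) y = gray s v y + 1 := by
  obtain ⟨n, rfl⟩ : ∃ n, s = n + 1 := ⟨s - 1, by omega⟩
  have hn : n + 1 - 1 = n := rfl
  have hb : ∀ i, i ≤ n → (v + 2 ^ (n + 1 - 1)).val.testBit i =
      if i = n then !v.val.testBit i else v.val.testBit i := by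
    intro i hi
    rw [val_add_pow (n+1) hs v, hn, Nat.add_comm, Nat.testBit_mod_two_pow,
      decide_eq_true (by omega : i < n + 1), Bool.true_and]
    rcases Nat.lt_or_ge i n with h | h
    · rw [Nat.testBit_two_pow_add_gt h, if_neg (by omega)]
    · have : i = n := by omega
      subst this
      rw [Nat.testBit_two_pow_add_eq, if_pos rfl]
  have htop : gdigit (n+1) (v + 2 ^ (n + 1 - 1)) n = gdigit (n+1) v n + 1 := by
    unfold gdigit
    rw [hb n le_rfl, if_pos rfl]
    cases h : v.val.testBit n
    · simp
    · simp; decide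
  have hlow : ∀ i : Fin n, gdigit (n+1) (v + 2 ^ (n + 1 - 1)) (i : ℕ) = gdigit (n+1) v i := by
    intro i
    unfold gdigit
    rw [hb i (le_of_lt i.isLt), if_neg (by omega : (i : ℕ) ≠ n)]
  unfold gray
  simp only [hn] at *
  rw [htop]
  rw [Finset.sum_congr rfl (fun i _ => by rw [hlow i])]
  ring

theorem hammingDist_gray_add' (s : ℕ) (hs : 2 ≤ s) (u v : ZMod (2^s)) :
    hammingDist (gray s u) (gray s (v + 2 ^ (s - 1))) + hammingDist (gray s u) (gray s v) =
      2 ^ (s - 1) := by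
  have key : ∀ a b : ZMod 2, (a ≠ b + 1) ↔ a = b := by decide
  unfold hammingDist
  have h1 : (Finset.univ.filter fun y => gray s u y ≠ gray s (v + 2 ^ (s-1)) y) =
      (Finset.univ.filter fun y => gray s u y = gray s v y) := by
    apply Finset.filter_congr
    intro y _
    rw [gray_add_pow s hs v y, key]
  rw [h1]
  have h2 : (Finset.univ.filter fun y => gray s u y ≠ gray s v y) =
      (Finset.univ.filter fun y => ¬ (gray s u y = gray s v y)) := rfl
  rw [h2, Finset.card_filter_add_card_filter_not]
  simp [Fintype.card_fun]
end

section
/- Let s > 2 and let C ⊆ Z_{2^s}^4 be the subgroup generated by the two vectors (1,1,1,1) and (0, 2^{s−2}, 2^{s−1}, 3·2^{s−2}). Then the binary code Φ(C) ⊆ Z_2^{2^{s+1}} is linear, i.e. closed under addition. -/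
/-- The coordinatewise extension `Φ` of the Gray map, on vectors indexed by `ι`. -/
def PhiMap {ι : Type} (s : ℕ) (u : ι → ZMod (2^s)) :
    ι × (Fin (s - 1) → ZMod 2) → ZMod 2 :=
  fun p => gray s (u p.1) p.2

/-- A binary code is linear if it is closed under addition. -/
def IsLinearCode {V : Type} [Add V] (C : Set V) : Prop :=
  ∀ x ∈ C, ∀ y ∈ C, x + y ∈ C

/-!
Each coordinate of the Gray image `φ(u)` is an `𝔽₂`-linear form in the binary digits of `u`, so
`φ(u) + φ(v) = φ(u ⊕ v)` for the bitwise xor `⊕`; it therefore suffices that the code is closed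
under coordinatewise xor. With `s = m + 2`, a codeword is `t ↦ a + b t 2^m` (`t = 0, …, 3`): its
low `m` digits do not depend on `t`, and its top two digits follow the affine map `t ↦ A + b t`
of `ℤ/4`. Xor acts separately on the low digits and on the top two digits, and the xor of two
affine maps of `ℤ/4` is again affine (a finite check).
-/

lemma gdigit_natCast_xor (s : ℕ) (u v : ZMod (2 ^ s)) (i : ℕ) :
    gdigit s ((u.val ^^^ v.val : ℕ) : ZMod (2 ^ s)) i = gdigit s u i + gdigit s v i := by
  unfold gdigit
  rw [ZMod.val_natCast, Nat.mod_eq_of_lt (Nat.xor_lt_two_pow u.val_lt v.val_lt), Nat.testBit_xor]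
  cases u.val.testBit i <;> cases v.val.testBit i <;> decide

lemma gray_natCast_xor (s : ℕ) (u v : ZMod (2 ^ s)) :
    gray s ((u.val ^^^ v.val : ℕ) : ZMod (2 ^ s)) = gray s u + gray s v := by
  funext y
  simp only [gray, Pi.add_apply, gdigit_natCast_xor, add_mul, Finset.sum_add_distrib]
  ring

lemma PhiMap_add {ι : Type} (s : ℕ) (u v : ι → ZMod (2 ^ s)) :
    PhiMap s u + PhiMap s v
      = PhiMap s fun i => (((u i).val ^^^ (v i).val : ℕ) : ZMod (2 ^ s)) := by
  funext p
  simp only [PhiMap, Pi.add_apply, gray_natCast_xor]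

lemma Nat.add_mul_two_pow_xor {m a c : ℕ} (ha : a < 2 ^ m) (hc : c < 2 ^ m) (x y : ℕ) :
    (a + x * 2 ^ m) ^^^ (c + y * 2 ^ m) = (a ^^^ c) + (x ^^^ y) * 2 ^ m := by
  apply Nat.eq_of_testBit_eq
  intro j
  rw [Nat.add_comm a, Nat.add_comm c, Nat.add_comm (a ^^^ c), Nat.mul_comm x, Nat.mul_comm y,
    Nat.mul_comm (x ^^^ y), Nat.testBit_xor, Nat.testBit_two_pow_mul_add _ ha,
    Nat.testBit_two_pow_mul_add _ hc, Nat.testBit_two_pow_mul_add _ (Nat.xor_lt_two_pow ha hc)]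
  split_ifs <;> simp only [Nat.testBit_xor]

theorem ZMod.exists_xor_val_add_mul : ∀ a b c d : ZMod 4, ∃ f : ZMod 4, ∀ t : ZMod 4,
    (((a + b * t).val ^^^ (c + d * t).val : ℕ) : ZMod 4)
      = ((a.val ^^^ c.val : ℕ) : ZMod 4) + f * t := by
  decide

section LowHigh

variable {m : ℕ}

/-- For `r < 2 ^ m`, the element of `ZMod (2 ^ (m + 2))` whose low `m` binary digits are those of
`r` and whose top two digits are those of `h`. -/
def lowHigh (r : ℕ) (h : ZMod 4) : ZMod (2 ^ (m + 2)) := r + h.val * 2 ^ m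

lemma lowHigh_natCast (r n : ℕ) : (lowHigh r n : ZMod (2 ^ (m + 2))) = r + n * 2 ^ m := by
  have hmod : n % 4 * 2 ^ m ≡ n * 2 ^ m [MOD 2 ^ (m + 2)] := by
    rw [pow_add, mul_comm]
    exact (Nat.mod_modEq n 4).mul_right' _
  have hcast := (ZMod.natCast_eq_natCast_iff _ _ _).2 hmod
  simp only [Nat.cast_mul, Nat.cast_pow, Nat.cast_ofNat] at hcast
  rw [lowHigh, ZMod.val_natCast, hcast]

lemma exists_lowHigh (a : ZMod (2 ^ (m + 2))) : ∃ r < 2 ^ m, ∃ h : ZMod 4, lowHigh r h = a :=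
  ⟨a.val % 2 ^ m, Nat.mod_lt _ (Nat.two_pow_pos m), (a.val / 2 ^ m : ℕ), by
    rw [lowHigh_natCast]
    exact_mod_cast (congrArg Nat.cast (Nat.mod_add_div' a.val (2 ^ m))).trans
      (ZMod.natCast_zmod_val a)⟩

lemma lowHigh_add_mul (r k t : ℕ) (h : ZMod 4) :
    lowHigh r h + (k * (t * 2 ^ m) : ZMod (2 ^ (m + 2))) = lowHigh r (h + k * t) := by
  rw [← ZMod.natCast_zmod_val h, ← Nat.cast_mul, ← Nat.cast_add, lowHigh_natCast,
    lowHigh_natCast]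
  push_cast
  ring

lemma val_lowHigh {r : ℕ} (hr : r < 2 ^ m) (h : ZMod 4) :
    (lowHigh r h : ZMod (2 ^ (m + 2))).val = r + h.val * 2 ^ m := by
  have hlt : r + h.val * 2 ^ m < 2 ^ (m + 2) := by
    have := Nat.mul_le_mul_right (2 ^ m) (Nat.le_of_lt_succ h.val_lt)
    rw [pow_add]
    omega
  have hcast : lowHigh r h = ((r + h.val * 2 ^ m : ℕ) : ZMod (2 ^ (m + 2))) := by
    push_cast
    rfl
  rw [hcast, ZMod.val_natCast, Nat.mod_eq_of_lt hlt]

lemma natCast_val_xor_lowHigh {r r' : ℕ} (hr : r < 2 ^ m) (hr' : r' < 2 ^ m) (h h' : ZMod 4) :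
    (((lowHigh (m := m) r h).val ^^^ (lowHigh (m := m) r' h').val : ℕ) : ZMod (2 ^ (m + 2)))
      = lowHigh (r ^^^ r') (h.val ^^^ h'.val : ℕ) := by
  rw [val_lowHigh hr, val_lowHigh hr', Nat.add_mul_two_pow_xor hr hr', lowHigh_natCast]
  push_cast
  rfl

lemma exists_natCast_val_xor_eq_add_mul (a b c d : ZMod (2 ^ (m + 2))) :
    ∃ e f : ZMod (2 ^ (m + 2)), ∀ t : ℕ,
      (((a + b * (t * 2 ^ m)).val ^^^ (c + d * (t * 2 ^ m)).val : ℕ) : ZMod (2 ^ (m + 2)))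
        = e + f * (t * 2 ^ m : ZMod (2 ^ (m + 2))) := by
  obtain ⟨r, hr, h, rfl⟩ := exists_lowHigh a
  obtain ⟨r', hr', h', rfl⟩ := exists_lowHigh c
  obtain ⟨k, rfl⟩ := ZMod.natCast_zmod_surjective b
  obtain ⟨k', rfl⟩ := ZMod.natCast_zmod_surjective d
  obtain ⟨f, hf⟩ := ZMod.exists_xor_val_add_mul h k h' k'
  refine ⟨lowHigh (r ^^^ r') (h.val ^^^ h'.val : ℕ), f.val, fun t => ?_⟩
  rw [lowHigh_add_mul, lowHigh_add_mul, natCast_val_xor_lowHigh hr hr', hf, lowHigh_add_mul,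
    ZMod.natCast_zmod_val]

end LowHigh

lemma vecCons_eq_natCast_mul {R : Type*} [CommSemiring R] (c : R) :
    ![0, c, 2 * c, 3 * c] = fun j : Fin 4 => ((j : ℕ) : R) * c := by
  funext j
  fin_cases j <;> simp

lemma mem_closure_iff_exists_add_mul {n : ℕ} (c : ZMod n) (u : Fin 4 → ZMod n) :
    u ∈ AddSubgroup.closure {fun _ => 1, fun j : Fin 4 => ((j : ℕ) : ZMod n) * c}
      ↔ ∃ a b : ZMod n, u = fun j : Fin 4 => a + b * ((j : ℕ) * c) := by
  rw [AddSubgroup.mem_closure_pair]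
  constructor
  · rintro ⟨k, l, rfl⟩
    exact ⟨k, l, funext fun j => by simp [zsmul_eq_mul]⟩
  · rintro ⟨a, b, rfl⟩
    exact ⟨(a.cast : ℤ), (b.cast : ℤ), funext fun j => by
      rw [Pi.add_apply, Pi.smul_apply, Pi.smul_apply, zsmul_eq_mul, zsmul_eq_mul,
        ZMod.intCast_zmod_cast, ZMod.intCast_zmod_cast, mul_one]⟩

theorem gray_image_linear (s : ℕ) (hs : 2 < s) :
    IsLinearCode (PhiMap s ''
      ((AddSubgroup.closure
          ({(fun _ => 1 : Fin 4 → ZMod (2^s)),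
            ![0, 2 ^ (s - 2), 2 ^ (s - 1), 3 * 2 ^ (s - 2)]} :
            Set (Fin 4 → ZMod (2^s))) : AddSubgroup (Fin 4 → ZMod (2^s))) :
        Set (Fin 4 → ZMod (2^s)))) := by
  obtain ⟨m, rfl⟩ : ∃ m, s = m + 2 := ⟨s - 2, by omega⟩
  have hg : (![0, 2 ^ (m + 2 - 2), 2 ^ (m + 2 - 1), 3 * 2 ^ (m + 2 - 2)] :
      Fin 4 → ZMod (2 ^ (m + 2))) = fun j : Fin 4 => ((j : ℕ) : ZMod (2 ^ (m + 2))) * 2 ^ m := by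
    show ![0, 2 ^ m, 2 ^ (m + 1), 3 * 2 ^ m] = _
    rw [pow_succ' (2 : ZMod (2 ^ (m + 2))), vecCons_eq_natCast_mul]
  rw [hg]
  rintro _ ⟨u, hu, rfl⟩ _ ⟨v, hv, rfl⟩
  obtain ⟨a, b, rfl⟩ := (mem_closure_iff_exists_add_mul _ _).1 hu
  obtain ⟨c, d, rfl⟩ := (mem_closure_iff_exists_add_mul _ _).1 hv
  obtain ⟨e, f, hef⟩ := exists_natCast_val_xor_eq_add_mul a b c d
  refine ⟨_, (mem_closure_iff_exists_add_mul _ _).2 ⟨e, f, rfl⟩, ?_⟩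
  rw [PhiMap_add]
  congr 1
  funext j
  exact (hef j).symm
end

section
/- Let s > 2 and let i be an integer with 1 ≤ i ≤ s−2. Let C ⊆ Z_{2^s}^{2^{s+1−i}} be the subgroup generated by the all-ones vector and the vector 2^{i−1}·(0, 1, 2, …, 2^{s+1−i}−1). Then the binary code Φ(C) is not linear. -/
/-!
The Gray map turns bitwise exclusive or on `ZMod (2^s)` into addition over `ZMod 2`, and it is
injective, so `Φ(C)` is linear exactly when `C` is closed under coordinatewise exclusive or. For the
generator `v = 2^e (0, 1, 2, …)` the word `v ⊕ 2v` has coordinates `0, 3·2^e, 5·2^e` at positions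
`0, 1, 3`. Were it `m·𝟙 + n·v`, position `0` would force `m = 0`, position `1` gives `n 2^e = 3·2^e`,
and then position `3` gives `5·2^e = 3 n 2^e = 9·2^e`, i.e. `2^{e+2} = 0` in `ZMod (2^s)`,
impossible once `e + 2 < s`.
-/

section GrayMap

variable {s : ℕ}

def digitXor (u w : ZMod (2^s)) : ZMod (2^s) := ((u.val ^^^ w.val : ℕ) : ZMod (2^s))

theorem val_digitXor (u w : ZMod (2^s)) : (digitXor u w).val = u.val ^^^ w.val :=
  ZMod.val_natCast_of_lt (Nat.xor_lt_two_pow (ZMod.val_lt u) (ZMod.val_lt w))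

theorem digitXor_natCast {a b : ℕ} (ha : a < 2^s) (hb : b < 2^s) :
    digitXor (a : ZMod (2^s)) (b : ZMod (2^s)) = ((a ^^^ b : ℕ) : ZMod (2^s)) := by
  rw [digitXor, ZMod.val_natCast_of_lt ha, ZMod.val_natCast_of_lt hb]

theorem gdigit_digitXor (u w : ZMod (2^s)) (j : ℕ) :
    gdigit s (digitXor u w) j = gdigit s u j + gdigit s w j := by
  unfold gdigit
  rw [val_digitXor, Nat.testBit_xor]
  cases u.val.testBit j <;> cases w.val.testBit j <;> decide

theorem gray_digitXor (u w : ZMod (2^s)) : gray s (digitXor u w) = gray s u + gray s w := by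
  funext y
  simp only [gray, Pi.add_apply, gdigit_digitXor, add_mul, Finset.sum_add_distrib]
  ring

theorem gdigit_eq_zero_of_le (u : ZMod (2^s)) {j : ℕ} (hj : s ≤ j) : gdigit s u j = 0 := by
  have : u.val < 2^j := (ZMod.val_lt u).trans_le (Nat.pow_le_pow_right two_pos hj)
  simp [gdigit, Nat.testBit_lt_two_pow this]

theorem eq_of_gdigit_eq {u w : ZMod (2^s)} (h : ∀ j, gdigit s u j = gdigit s w j) : u = w := by
  refine ZMod.val_injective _ (Nat.eq_of_testBit_eq fun j => ?_)
  have hj := h j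
  unfold gdigit at hj
  cases hu : u.val.testBit j <;> cases hw : w.val.testBit j <;> simp [hu, hw] at hj ⊢

theorem gray_injective : Function.Injective (gray s) := by
  intro u w h
  -- The coordinate at `y = 0` reads off the top digit, and then the one at `y = e_j` the digit `j`.
  have htop : gdigit s u (s - 1) = gdigit s w (s - 1) := by
    simpa [gray] using congrFun h 0
  refine eq_of_gdigit_eq fun j => ?_
  rcases lt_trichotomy j (s - 1) with hj | rfl | hj
  · have hcoord := congrFun h (Pi.single ⟨j, hj⟩ 1)
    simp only [gray, Pi.single_apply, mul_ite, mul_one, mul_zero, Finset.sum_ite_eq',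
      Finset.mem_univ, if_true, htop] at hcoord
    exact add_left_cancel hcoord
  · exact htop
  · rw [gdigit_eq_zero_of_le u (by omega), gdigit_eq_zero_of_le w (by omega)]

variable {ι : Type}

theorem PhiMap_digitXor (u w : ι → ZMod (2^s)) :
    PhiMap s (fun k => digitXor (u k) (w k)) = PhiMap s u + PhiMap s w := by
  funext p
  exact congrFun (gray_digitXor (u p.1) (w p.1)) p.2

theorem PhiMap_injective : Function.Injective (PhiMap s : (ι → ZMod (2^s)) → _) :=
  fun _ _ h => funext fun k => gray_injective (funext fun y => congrFun h (k, y))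

theorem digitXor_mem_of_isLinearCode_image {C : Set (ι → ZMod (2^s))}
    (hC : IsLinearCode (PhiMap s '' C)) {u w : ι → ZMod (2^s)} (hu : u ∈ C) (hw : w ∈ C) :
    (fun k => digitXor (u k) (w k)) ∈ C := by
  obtain ⟨c, hc, hcuw⟩ := hC _ ⟨u, hu, rfl⟩ _ ⟨w, hw, rfl⟩
  rw [← PhiMap_digitXor, PhiMap_injective.eq_iff] at hcuw
  exact hcuw ▸ hc

end GrayMap

theorem two_pow_ne_zero_of_lt {s k : ℕ} (hk : k < s) : (2 : ZMod (2^s)) ^ k ≠ 0 := by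
  have : ((2^k : ℕ) : ZMod (2^s)) ≠ 0 := by
    rw [Ne, ZMod.natCast_eq_zero_iff, Nat.pow_dvd_pow_iff_le_right one_lt_two]
    omega
  exact_mod_cast this

theorem digitXor_two_pow_mul {s e a b : ℕ} (ha : 2^e * a < 2^s) (hb : 2^e * b < 2^s) :
    digitXor ((2^e * a : ℕ) : ZMod (2^s)) ((2^e * b : ℕ) : ZMod (2^s))
      = ((2^e * (a ^^^ b) : ℕ) : ZMod (2^s)) := by
  rw [digitXor_natCast ha hb]
  simp only [mul_comm (2^e), ← Nat.shiftLeft_eq, Nat.shiftLeft_xor_distrib]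

theorem digitXor_add_self_not_mem_closure {s e N : ℕ} (he : e + 3 ≤ s) (hN : 4 ≤ N)
    (v : Fin N → ZMod (2^s)) (hv : ∀ k, v k = ((2^e * k : ℕ) : ZMod (2^s))) :
    (fun k => digitXor (v k) ((v + v) k)) ∉ AddSubgroup.closure {1, v} := by
  intro hmem
  obtain ⟨m, n, hmn⟩ := AddSubgroup.mem_closure_pair.mp hmem
  have hcoord (a b : ℕ) (ha : a ≤ 3) (hab : a ^^^ 2 * a = b) :
      (m : ZMod (2^s)) + n * ((2^e * a : ℕ) : ZMod (2^s)) = ((2^e * b : ℕ) : ZMod (2^s)) := by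
    have hlt (c : ℕ) (hc : c ≤ 6) : 2^e * c < 2^s :=
      calc 2^e * c < 2^e * 2^3 := by gcongr; omega
        _ ≤ 2^s := by rw [← pow_add]; exact Nat.pow_le_pow_right two_pos he
    have hk := congrFun hmn ⟨a, by omega⟩
    simp only [Pi.add_apply, Pi.mul_apply, Pi.intCast_apply, zsmul_eq_mul, mul_one, hv] at hk
    rwa [← Nat.cast_add, ← mul_add, ← two_mul,
      digitXor_two_pow_mul (hlt a (by omega)) (hlt (2 * a) (by omega)), hab] at hk
  have h0 := hcoord 0 0 (by norm_num) (by decide)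
  have h1 := hcoord 1 3 (by norm_num) (by decide)
  have h3 := hcoord 3 5 (by norm_num) (by decide)
  push_cast at h0 h1 h3
  refine two_pow_ne_zero_of_lt (s := s) (k := e + 2) (by omega) ?_
  linear_combination h3 - 3 * h1 + 2 * h0

theorem gray_image_not_linear_general (s : ℕ) (hs : 2 < s) (i : ℕ) (hi2 : i ≤ s - 2) :
    ¬ IsLinearCode (PhiMap s ''
      ((AddSubgroup.closure
          ({(fun _ => 1 : Fin (2 ^ (s + 1 - i)) → ZMod (2^s)),
            fun k : Fin (2 ^ (s + 1 - i)) => (2 ^ (i - 1) : ZMod (2^s)) * ((k : ℕ) : ZMod (2^s))} :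
            Set (Fin (2 ^ (s + 1 - i)) → ZMod (2^s)))) :
        Set (Fin (2 ^ (s + 1 - i)) → ZMod (2^s)))) := by
  set v : Fin (2 ^ (s + 1 - i)) → ZMod (2^s) := fun k => 2 ^ (i - 1) * (k : ℕ)
  intro hlin
  have hv : v ∈ AddSubgroup.closure {1, v} := AddSubgroup.subset_closure (by simp)
  have hN : 4 ≤ 2 ^ (s + 1 - i) :=
    calc 4 = 2 ^ 2 := by norm_num
      _ ≤ 2 ^ (s + 1 - i) := Nat.pow_le_pow_right two_pos (by omega)
  exact digitXor_add_self_not_mem_closure (e := i - 1) (by omega) hN v (fun _ => by push_cast; rfl)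
    (digitXor_mem_of_isLinearCode_image hlin hv (add_mem hv hv))

theorem gray_image_not_linear (s : ℕ) (hs : 2 < s) (i : ℕ) (hi1 : 1 ≤ i) (hi2 : i ≤ s - 2) :
    ¬ IsLinearCode (PhiMap s ''
      ((AddSubgroup.closure
          ({(fun _ => 1 : Fin (2 ^ (s + 1 - i)) → ZMod (2^s)),
            fun k : Fin (2 ^ (s + 1 - i)) => (2 ^ (i - 1) : ZMod (2^s)) * ((k : ℕ) : ZMod (2^s))} :
            Set (Fin (2 ^ (s + 1 - i)) → ZMod (2^s)))) :
        Set (Fin (2 ^ (s + 1 - i)) → ZMod (2^s)))) :=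
  gray_image_not_linear_general s hs i hi2
end

section
/- Let s ≥ 2 and let C ⊆ Z_{2^s}^n be a subgroup. For every b ∈ Z_{2^s}^n with 2b = 0 and every u ∈ Z_{2^s}^n one has Φ(b) + Φ(u) = Φ(b + u); consequently, if b ∈ C and 2b = 0, then Φ(b) belongs to the kernel K(Φ(C)). -/
/-- The kernel `K(C) = {x : x + C = C}` of a binary code. -/
def kernelSet {V : Type} [Add V] (C : Set V) : Set V :=
  {x | (fun c => x + c) '' C = C}

lemma val_cases (s : ℕ) (hs : 2 ≤ s) (b : ZMod (2^s)) (hb : b + b = 0) :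
    b = 0 ∨ (ZMod.val b) = 2^(s-1) := by
  haveI : NeZero (2^s) := ⟨by positivity⟩
  have hlt : b.val < 2^s := ZMod.val_lt b
  have h : (b+b).val = 0 := by rw [hb]; simp
  rw [ZMod.val_add] at h
  have hdvd : 2^s ∣ b.val + b.val := Nat.dvd_of_mod_eq_zero h
  have h2 : 2^(s-1) ∣ b.val := by
    have hspow : 2^s = 2^(s-1) * 2 := by rw [← pow_succ]; congr 1; omega
    obtain ⟨m, hm⟩ := hdvd
    have hm2 : b.val + b.val = 2^(s-1)*m + 2^(s-1)*m := by rw [hm, hspow]; ring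
    exact ⟨m, by omega⟩
  obtain ⟨k, hk⟩ := h2
  have hk2 : k < 2 := by
    by_contra hc
    push_neg at hc
    have hspow : 2^s = 2^(s-1) * 2 := by rw [← pow_succ]; congr 1; omega
    have hge : 2^(s-1) * 2 ≤ 2^(s-1) * k := Nat.mul_le_mul_left _ hc
    omega
  interval_cases k
  · left
    have : b.val = 0 := by omega
    exact (ZMod.val_eq_zero b).1 this
  · right; omega

lemma gdigit_top (s : ℕ) (hs : 2 ≤ s) (u : ZMod (2^s)) :
    gdigit s u (s-1) = if 2^(s-1) ≤ u.val then 1 else 0 := by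
  haveI : NeZero (2^s) := ⟨by positivity⟩
  have hlt : u.val < 2^s := ZMod.val_lt u
  unfold gdigit
  congr 1
  have hspow : 2^s = 2^(s-1) * 2 := by rw [← pow_succ]; congr 1; omega
  rw [Nat.testBit_eq_decide_div_mod_eq]
  have hd2 : u.val / 2^(s-1) < 2 := Nat.div_lt_of_lt_mul (by omega)
  rw [Nat.mod_eq_of_lt hd2]
  simp only [eq_iff_iff, decide_eq_true_eq]
  constructor
  · intro h
    have := Nat.le_div_iff_mul_le (Nat.pos_of_ne_zero (by positivity)) |>.1 (le_of_eq h.symm)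
    simpa using this
  · intro h
    have h1 : 1 ≤ u.val / 2^(s-1) := (Nat.one_le_div_iff (by positivity)).2 h
    omega

lemma gray_key (s : ℕ) (hs : 2 ≤ s) (b u : ZMod (2^s)) (hb : b + b = 0)
    (y : Fin (s-1) → ZMod 2) :
    gray s b y + gray s u y = gray s (b+u) y := by
  haveI : NeZero (2^s) := ⟨by positivity⟩
  rcases val_cases s hs b hb with h0 | hP
  · subst h0
    have : gray s 0 y = 0 := by
      unfold gray gdigit
      simp [ZMod.val_zero]
    rw [this, zero_add, zero_add]
  · -- digits of b
    have hP2 : 2^(s-1) ≤ 2^(s-1) := le_refl _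
    have hbtop : gdigit s b (s-1) = 1 := by
      rw [gdigit_top s hs, hP]; simp
    have hblow : ∀ i : Fin (s-1), gdigit s b (i : ℕ) = 0 := by
      intro i
      unfold gdigit
      rw [hP, Nat.testBit_two_pow_of_ne (by omega : s-1 ≠ (i:ℕ))]
      simp
    -- value of b+u
    have hval : (b+u).val = (2^(s-1) + u.val) % 2^s := by
      rw [ZMod.val_add, hP]
    have hult : u.val < 2^s := ZMod.val_lt u
    have hspow : 2^s = 2^(s-1) * 2 := by rw [← pow_succ]; congr 1; omega
    have hlow : ∀ i : Fin (s-1), gdigit s (b+u) (i : ℕ) = gdigit s u (i : ℕ) := by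
      intro i
      unfold gdigit
      congr 1
      have hmod : (b+u).val % 2^(s-1) = u.val % 2^(s-1) := by
        rw [hval, Nat.mod_mod_of_dvd _ (pow_dvd_pow 2 (by omega)), Nat.add_mod_left]
      have h1 : ((b+u).val % 2^(s-1)).testBit i = (b+u).val.testBit i := by
        rw [Nat.testBit_mod_two_pow]
        simp [i.isLt]
      have h2 : (u.val % 2^(s-1)).testBit i = u.val.testBit i := by
        rw [Nat.testBit_mod_two_pow]
        simp [i.isLt]
      rw [← h1, ← h2, hmod]
    have htop : gdigit s (b+u) (s-1) = gdigit s u (s-1) + 1 := by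
      rw [gdigit_top s hs, gdigit_top s hs]
      by_cases hc : 2^(s-1) ≤ u.val
      · have hV : (b+u).val = u.val - 2^(s-1) := by
          rw [hval, Nat.mod_eq_sub_mod (by omega), Nat.mod_eq_of_lt (by omega)]
          omega
        have : ¬ 2^(s-1) ≤ (b+u).val := by omega
        rw [if_neg this, if_pos hc]; decide
      · have hV : (b+u).val = 2^(s-1) + u.val := by
          rw [hval, Nat.mod_eq_of_lt (by omega)]
        have : 2^(s-1) ≤ (b+u).val := by omega
        rw [if_pos this, if_neg hc]; decide
    unfold gray
    rw [htop, hbtop]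
    have hsum : ∑ i : Fin (s-1), gdigit s (b+u) (i:ℕ) * y i
        = ∑ i : Fin (s-1), gdigit s u (i:ℕ) * y i := by
      apply Finset.sum_congr rfl
      intro i _
      rw [hlow i]
    have hbsum : ∑ i : Fin (s-1), gdigit s b (i:ℕ) * y i = 0 := by
      apply Finset.sum_eq_zero
      intro i _
      rw [hblow i, zero_mul]
    rw [hsum, hbsum]
    ring

theorem order_two_in_kernel (s n : ℕ) (hs : 2 ≤ s) (C : AddSubgroup (Fin n → ZMod (2^s))) :
    (∀ b u : Fin n → ZMod (2^s), b + b = 0 →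
      PhiMap s b + PhiMap s u = PhiMap s (b + u)) ∧
    (∀ b ∈ C, b + b = 0 →
      PhiMap s b ∈ kernelSet (PhiMap s '' (C : Set (Fin n → ZMod (2^s))))) := by
  have key : ∀ b u : Fin n → ZMod (2^s), b + b = 0 →
      PhiMap s b + PhiMap s u = PhiMap s (b + u) := by
    intro b u hb
    funext p
    have hbp : b p.1 + b p.1 = 0 := congrFun hb p.1
    exact gray_key s hs (b p.1) (u p.1) hbp p.2
  refine ⟨key, ?_⟩
  intro b hbC hb
  show (fun c => PhiMap s b + c) '' _ = _
  ext x
  constructor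
  · rintro ⟨_, ⟨u, huC, rfl⟩, rfl⟩
    exact ⟨b + u, C.add_mem hbC huC, (key b u hb).symm⟩
  · rintro ⟨c, hcC, rfl⟩
    refine ⟨PhiMap s (c - b), ⟨c - b, C.sub_mem hcC hbC, rfl⟩, ?_⟩
    show PhiMap s b + PhiMap s (c - b) = PhiMap s c
    rw [key b (c - b) hb, show b + (c - b) = c from by abel]
end

section
/- Let s ≥ 2 and set v = 2^{s−1} − 1 = Σ_{i=0}^{s−2} 2^i ∈ Z_{2^s}. Then for every u ∈ Z_{2^s} one has φ(v) + φ(u) = φ(v − u); consequently, for every subgroup C ⊆ Z_{2^s}^n containing the all-ones vector, the binary vector Φ(v·1) (1 being the all-ones vector of length n) belongs to the kernel K(Φ(C)). -/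
/-! The constant `v = 2^(s-1) - 1` has binary digits `1, …, 1, 0`, so subtracting an element
`u` from it causes no borrow in the low `s - 1` digits and leaves the top digit of `u` in place:
the digits of `v - u` are those of `u` xor those of `v`. Since `φ(u)` is affine-linear in the
digit vector of `u`, this gives `φ(v) + φ(u) = φ(v - u)`. Translation by `Φ(v·1)` therefore maps
`Φ(C)` onto the image of `C` under the bijection `w ↦ v·1 - w` of `C`, which is `Φ(C)` again. -/

theorem Nat.xor_two_pow_sub_one_of_lt {k l : ℕ} (h : l < 2 ^ k) :
    l ^^^ (2 ^ k - 1) = 2 ^ k - 1 - l := by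
  have := BitVec.toNat_not (x := BitVec.ofNat k l)
  rwa [← BitVec.xor_allOnes, BitVec.toNat_xor, BitVec.toNat_allOnes, BitVec.toNat_ofNat,
    Nat.mod_eq_of_lt h] at this

theorem Nat.xor_two_pow_sub_one_add_self (k a : ℕ) :
    (a ^^^ (2 ^ k - 1)) + a = 2 ^ k - 1 + 2 ^ (k + 1) * (a / 2 ^ k) := by
  have hm : 2 ^ k - 1 < 2 ^ k := Nat.sub_lt (Nat.two_pow_pos k) one_pos
  have hlow : (a ^^^ (2 ^ k - 1)) % 2 ^ k = 2 ^ k - 1 - a % 2 ^ k := by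
    rw [Nat.xor_mod_two_pow, Nat.mod_eq_of_lt hm,
      Nat.xor_two_pow_sub_one_of_lt (Nat.mod_lt _ (Nat.two_pow_pos k))]
  have hhigh : (a ^^^ (2 ^ k - 1)) / 2 ^ k = a / 2 ^ k := by
    rw [Nat.xor_div_two_pow, Nat.div_eq_of_lt hm, Nat.xor_zero]
  have hxor := Nat.div_add_mod (a ^^^ (2 ^ k - 1)) (2 ^ k)
  have ha := Nat.div_add_mod a (2 ^ k)
  have hr := Nat.mod_lt a (Nat.two_pow_pos k)
  rw [hlow, hhigh] at hxor
  rw [Nat.pow_succ, Nat.mul_comm _ 2, Nat.mul_assoc]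
  omega

theorem ZMod.val_two_pow_pred_sub_one_sub (s : ℕ) (u : ZMod (2 ^ s)) :
    ((2 ^ (s - 1) - 1 : ZMod (2 ^ s)) - u).val = u.val ^^^ (2 ^ (s - 1) - 1) := by
  rcases s with _ | k
  · obtain rfl : u = 0 := Subsingleton.elim (α := ZMod 1) _ _
    simp
  have hm : 2 ^ k - 1 < 2 ^ (k + 1) := by
    have := Nat.two_pow_pos k
    rw [Nat.pow_succ]
    omega
  rw [Nat.add_sub_cancel, ← ZMod.val_natCast_of_lt (Nat.xor_lt_two_pow u.val_lt hm)]
  congr 1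
  have key := congrArg (Nat.cast : ℕ → ZMod (2 ^ (k + 1)))
    (Nat.xor_two_pow_sub_one_add_self k u.val)
  push_cast [Nat.one_le_two_pow] at key
  rw [ZMod.natCast_val, ZMod.cast_id] at key
  have hN : (2 : ZMod (2 ^ (k + 1))) ^ (k + 1) = 0 := by exact_mod_cast ZMod.natCast_self _
  linear_combination -key - ((u.val / 2 ^ k : ℕ) : ZMod (2 ^ (k + 1))) * hN

theorem AddSubgroup.const_mem_of_one_mem {n : ℕ} {ι : Type*} {C : AddSubgroup (ι → ZMod n)}
    (h : (fun _ => 1) ∈ C) (a : ZMod n) : (fun _ => a) ∈ C := by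
  simpa [Pi.smul_def] using C.zsmul_mem h (a.cast : ℤ)

theorem gdigit_two_pow_pred_sub_one_sub (s : ℕ) (u : ZMod (2 ^ s)) (i : ℕ) :
    gdigit s ((2 ^ (s - 1) - 1) - u) i = gdigit s (2 ^ (s - 1) - 1) i + gdigit s u i := by
  have hv := ZMod.val_two_pow_pred_sub_one_sub s 0
  rw [sub_zero, ZMod.val_zero, Nat.zero_xor] at hv
  unfold gdigit
  rw [ZMod.val_two_pow_pred_sub_one_sub, hv, Nat.testBit_xor]
  cases (2 ^ (s - 1) - 1).testBit i <;> cases u.val.testBit i <;> decide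

theorem gray_add_gray_of_gdigit {s : ℕ} {a b c : ZMod (2 ^ s)}
    (h : ∀ i, gdigit s c i = gdigit s a i + gdigit s b i) : gray s a + gray s b = gray s c := by
  funext y
  simp only [Pi.add_apply, gray, h, add_mul, Finset.sum_add_distrib]
  ring

theorem mem_kernelSet_image {G V : Type} [AddCommGroup G] [Add V] {f : G → V} {C : AddSubgroup G}
    {x : G} (hx : x ∈ C) (h : ∀ w ∈ C, f x + f w = f (x - w)) :
    f x ∈ kernelSet (f '' C) := by
  change (f x + ·) '' (f '' C) = f '' C
  rw [Set.image_image, Set.image_congr h, ← Set.image_image f (x - ·)]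
  congr 1
  ext w
  constructor
  · rintro ⟨w, hw, rfl⟩
    exact C.sub_mem hx hw
  · exact fun hw => ⟨x - w, C.sub_mem hx hw, sub_sub_cancel x w⟩

theorem all_but_top_in_kernel_general (s : ℕ) :
    (∀ u : ZMod (2^s),
      gray s (2 ^ (s - 1) - 1) + gray s u = gray s ((2 ^ (s - 1) - 1) - u)) ∧
    (∀ (n : ℕ) (C : AddSubgroup (Fin n → ZMod (2^s))),
      (fun _ => (1 : ZMod (2^s))) ∈ C →
      PhiMap s (fun _ : Fin n => (2 ^ (s - 1) - 1 : ZMod (2^s))) ∈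
        kernelSet (PhiMap s '' (C : Set (Fin n → ZMod (2^s))))) := by
  have hgray (u : ZMod (2 ^ s)) :
      gray s (2 ^ (s - 1) - 1) + gray s u = gray s ((2 ^ (s - 1) - 1) - u) :=
    gray_add_gray_of_gdigit (gdigit_two_pow_pred_sub_one_sub s u)
  refine ⟨hgray, fun n C hone => ?_⟩
  refine mem_kernelSet_image (AddSubgroup.const_mem_of_one_mem hone _) fun w _ => ?_
  funext p
  exact congrFun (hgray (w p.1)) p.2

theorem all_but_top_in_kernel (s : ℕ) (hs : 2 ≤ s) :
    (∀ u : ZMod (2^s),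
      gray s (2 ^ (s - 1) - 1) + gray s u = gray s ((2 ^ (s - 1) - 1) - u)) ∧
    (∀ (n : ℕ) (C : AddSubgroup (Fin n → ZMod (2^s))),
      (fun _ => (1 : ZMod (2^s))) ∈ C →
      PhiMap s (fun _ : Fin n => (2 ^ (s - 1) - 1 : ZMod (2^s))) ∈
        kernelSet (PhiMap s '' (C : Set (Fin n → ZMod (2^s))))) :=
  all_but_top_in_kernel_general s
end
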